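/- Let O be a complete discrete valuation ring with uniformizer π and C^• a complex of flat, separated, π-adically complete O-modules. Let ξ_1,…,ξ_N ∈ C^i satisfy ∂(ξ_j) = 0 for all j, and suppose the cohomology classes [ξ̄_1],…,[ξ̄_N] span H^i(C̄^•) over the residue field. Then the classes [ξ_1],…,[ξ_N] span H^i(C^•) over O. -/

import Mathlib

/-!
Lifting mod π is a π-adic Nakayama argument. By flatness, if `ω` is a cocycle and
`ω = Σ cⱼ ξⱼ + dη + πζ`, then `π dζ = 0` forces `ζ` to be a cocycle again, so the
decomposition can be iterated on `ζ`. The coefficients and primitives produced at stage `k`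
carry a factor `πᵏ`, hence sum to π-adically convergent series, whose limits decompose `ω`
exactly because `C^{i+1}` is π-adically separated.
-/

open Submodule Pointwise

section AdicTopology

variable {R : Type*} [CommRing R] {I : Ideal R}
  {M N : Type*} [AddCommGroup M] [Module R M] [AddCommGroup N] [Module R N]

theorem SModEq.map_smul_top {x y : M} (h : x ≡ y [SMOD (I • ⊤ : Submodule R M)])
    (f : M →ₗ[R] N) : f x ≡ f y [SMOD (I • ⊤ : Submodule R N)] :=
  (h.map f).mono (map_le_iff_le_comap.mpr (smul_top_le_comap_smul_top I f))

instance IsPrecomplete.prod [IsPrecomplete I M] [IsPrecomplete I N] :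
    IsPrecomplete I (M × N) where
  prec' f hf := by
    obtain ⟨a, ha⟩ := IsPrecomplete.prec inferInstance (f := fun n ↦ (f n).1)
      fun h ↦ (hf h).map_smul_top (LinearMap.fst R M N)
    obtain ⟨b, hb⟩ := IsPrecomplete.prec inferInstance (f := fun n ↦ (f n).2)
      fun h ↦ (hf h).map_smul_top (LinearMap.snd R M N)
    refine ⟨(a, b), fun n ↦ ?_⟩
    rw [← Prod.fst_add_snd (f n), ← Prod.fst_add_snd (a, b)]
    exact ((ha n).map_smul_top (LinearMap.inl R M N)).add
      ((hb n).map_smul_top (LinearMap.inr R M N))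

instance IsPrecomplete.pi {ι : Type*} [Fintype ι] {M : ι → Type*} [∀ i, AddCommGroup (M i)]
    [∀ i, Module R (M i)] [∀ i, IsPrecomplete I (M i)] : IsPrecomplete I (∀ i, M i) where
  prec' f hf := by
    classical
    choose a ha using fun i ↦ IsPrecomplete.prec inferInstance (f := fun n ↦ f n i)
      fun h ↦ (hf h).map_smul_top (LinearMap.proj i)
    refine ⟨a, fun n ↦ ?_⟩
    rw [← Finset.univ_sum_single (f n), ← Finset.univ_sum_single a]
    exact SModEq.sum fun i _ ↦ (ha i n).map_smul_top (LinearMap.single R M i)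

end AdicTopology

section PrincipalAdic

variable {R : Type*} [CommRing R] (π : R) {M : Type*} [AddCommGroup M] [Module R M]

theorem mem_span_singleton_pow_smul_top_iff {x : M} (n : ℕ) :
    x ∈ (Ideal.span {π} ^ n • ⊤ : Submodule R M) ↔ ∃ y, π ^ n • y = x := by
  simp [Ideal.span_singleton_pow, ideal_span_singleton_smul, mem_smul_pointwise_iff_exists]

theorem IsHausdorff.eq_zero_of_forall_pow_smul [IsHausdorff (Ideal.span {π}) M] {x : M}
    (h : ∀ n : ℕ, ∃ y, π ^ n • y = x) : x = 0 :=
  IsHausdorff.haus ‹_› x fun n ↦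
    SModEq.zero.mpr ((mem_span_singleton_pow_smul_top_iff π n).mpr (h n))

theorem sum_range_pow_smul_sub_sum_range (g : ℕ → M) {m n : ℕ} (h : m ≤ n) :
    ∑ k ∈ Finset.range n, π ^ k • g k - ∑ k ∈ Finset.range m, π ^ k • g k =
      π ^ m • ∑ k ∈ Finset.Ico m n, π ^ (k - m) • g k := by
  rw [← Finset.sum_Ico_eq_sub _ h, Finset.smul_sum]
  refine Finset.sum_congr rfl fun k hk ↦ ?_
  rw [smul_smul, ← pow_add, Nat.add_sub_cancel' (Finset.mem_Ico.mp hk).1]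

theorem IsPrecomplete.exists_sum_range_pow_smul_eq [IsPrecomplete (Ideal.span {π}) M]
    (g : ℕ → M) : ∃ L, ∀ n, ∃ y, ∑ k ∈ Finset.range n, π ^ k • g k = L + π ^ n • y := by
  obtain ⟨L, hL⟩ := IsPrecomplete.prec ‹_› (f := fun n ↦ ∑ k ∈ Finset.range n, π ^ k • g k)
    fun {m n} h ↦ by
      rw [SModEq.sub_mem, mem_span_singleton_pow_smul_top_iff, ← neg_sub,
        sum_range_pow_smul_sub_sum_range π g h]
      exact ⟨_, smul_neg _ _⟩
  refine ⟨L, fun n ↦ ?_⟩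
  obtain ⟨y, hy⟩ := (mem_span_singleton_pow_smul_top_iff π n).mp (SModEq.sub_mem.mp (hL n))
  exact ⟨y, by rw [hy, add_sub_cancel]⟩

variable {P : Type*} [AddCommGroup P] [Module R P]

theorem le_range_of_le_range_sup_smul [IsPrecomplete (Ideal.span {π}) P]
    [IsHausdorff (Ideal.span {π}) M] (f : P →ₗ[R] M) {K : Submodule R M}
    (hK : K ≤ LinearMap.range f ⊔ π • K) : K ≤ LinearMap.range f := by
  have step (z : K) : ∃ (p : P) (z' : K), (z : M) = f p + π • (z' : M) := by
    obtain ⟨_, ⟨p, rfl⟩, _, hz', hz⟩ := mem_sup.mp (hK z.2)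
    obtain ⟨z', hz'K, rfl⟩ := mem_smul_pointwise_iff_exists _ _ _ |>.mp hz'
    exact ⟨p, ⟨z', hz'K⟩, hz.symm⟩
  choose p next hnext using step
  intro z hz
  let w (n : ℕ) : K := next^[n] ⟨z, hz⟩
  have partial_sum (n : ℕ) :
      z = f (∑ k ∈ Finset.range n, π ^ k • p (w k)) + π ^ n • (w n : M) := by
    induction n with
    | zero => simp [w]
    | succ n ih =>
      rw [ih, hnext (w n), show w (n + 1) = next (w n) from
        Function.iterate_succ_apply' next n _]
      simp only [Finset.sum_range_succ, map_add, map_smul, smul_add, smul_smul, pow_succ]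
      abel
  obtain ⟨L, hL⟩ := IsPrecomplete.exists_sum_range_pow_smul_eq π fun k ↦ p (w k)
  refine ⟨L, (sub_eq_zero.mp <| IsHausdorff.eq_zero_of_forall_pow_smul π fun n ↦ ?_).symm⟩
  obtain ⟨y, hy⟩ := hL n
  refine ⟨f y + w n, ?_⟩
  rw [partial_sum n, hy, map_add, map_smul, smul_add]
  abel

end PrincipalAdic

theorem stmt6_general
    (O : Type) [CommRing O]
    (π : O)
    [IsAdicComplete (Ideal.span {π}) O]
    (C : ℤ → Type) [∀ i, AddCommGroup (C i)] [∀ i, Module O (C i)]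
    (d : ∀ i, C i →ₗ[O] C (i + 1))
    (hdd : ∀ i (x : C i), d (i + 1) (d i x) = 0)
    (hflat : ∀ i (x : C i), π • x = 0 → x = 0)
    [∀ i, IsAdicComplete (Ideal.span {π}) (C i)]
    (i : ℤ) (N : ℕ) (ξ : Fin N → C (i + 1))
    (hξ : ∀ j, d (i + 1) (ξ j) = 0)
    (hspan : ∀ ω : C (i + 1), (∃ z, d (i + 1) ω = π • z) →
      ∃ (c : Fin N → O) (η : C i) (ζ : C (i + 1)),
        ω = ∑ j, c j • ξ j + d i η + π • ζ) :
    ∀ ω : C (i + 1), d (i + 1) ω = 0 →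
      ∃ (c : Fin N → O) (η : C i), ω = ∑ j, c j • ξ j + d i η := by
  let f := (Fintype.linearCombination O ξ).coprod (d i)
  have hf (c : Fin N → O) (η : C i) : f (c, η) = ∑ j, c j • ξ j + d i η := rfl
  have hfd (p) : d (i + 1) (f p) = 0 := by
    simp [f, Fintype.linearCombination_apply, hξ, hdd]
  set Z := LinearMap.ker (d (i + 1))
  have hZ : Z ≤ LinearMap.range f ⊔ π • Z := by
    intro w hw
    obtain ⟨c, η, ζ, rfl⟩ := hspan w ⟨0, by rw [hw, smul_zero]⟩
    have hζ : ζ ∈ Z := hflat _ _ <| by simpa [Z, ← hf, hfd] using hw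
    exact add_mem_sup ⟨(c, η), rfl⟩ (smul_mem_pointwise_smul ζ π _ hζ)
  intro ω hω
  obtain ⟨⟨c, η⟩, h⟩ := le_range_of_le_range_sup_smul π f hZ hω
  exact ⟨c, η, h.symm⟩

/-- Let `O` be a complete discrete valuation ring with uniformizer `π`, and `(C^•, d)` a
cochain complex of flat, separated, π-adically complete `O`-modules.  Let
`ξ_1, …, ξ_N ∈ C^{i+1}` be cocycles whose reductions mod π span `H^{i+1}(C̄^•)` over the
residue field (i.e. every `ω ∈ C^{i+1}` with `dω ∈ πC^{i+2}` can be written as an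
`O`-linear combination of the `ξ_j` plus a coboundary plus an element of `πC^{i+1}`).
Then the classes `[ξ_1], …, [ξ_N]` span `H^{i+1}(C^•)` over `O`: every cocycle in
`C^{i+1}` is an `O`-linear combination of the `ξ_j` plus a coboundary. -/
theorem stmt6
    (O : Type) [CommRing O] [IsDomain O] [IsDiscreteValuationRing O]
    (π : O) (hπ : Irreducible π)
    [IsAdicComplete (Ideal.span {π}) O]
    (C : ℤ → Type) [∀ i, AddCommGroup (C i)] [∀ i, Module O (C i)]
    (d : ∀ i, C i →ₗ[O] C (i + 1))
    (hdd : ∀ i (x : C i), d (i + 1) (d i x) = 0)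
    (hflat : ∀ i (x : C i), π • x = 0 → x = 0)
    [∀ i, IsAdicComplete (Ideal.span {π}) (C i)]
    (i : ℤ) (N : ℕ) (ξ : Fin N → C (i + 1))
    (hξ : ∀ j, d (i + 1) (ξ j) = 0)
    (hspan : ∀ ω : C (i + 1), (∃ z, d (i + 1) ω = π • z) →
      ∃ (c : Fin N → O) (η : C i) (ζ : C (i + 1)),
        ω = ∑ j, c j • ξ j + d i η + π • ζ) :
    ∀ ω : C (i + 1), d (i + 1) ω = 0 →
      ∃ (c : Fin N → O) (η : C i), ω = ∑ j, c j • ξ j + d i η :=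
  stmt6_general O π C d hdd hflat i N ξ hξ hspan
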